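/- arXiv:1504.04138 — 3 statements merged into one kernel-verified Lean document; each statement's English description precedes it below -/
import Mathlib

section
/- Let β > 0 and for each r > 0 let y(r) > 0 be the unique solution of r·y·(1+2y²)^((β-1)/2) = 1. Then r³·(y(r) − 1/r) → −(β−1) as r → ∞; that is, y(r) = 1/r − (β−1)/r³ + o(r⁻³). -/
open Filter Real

lemma alg4 (β r t : ℝ) (hr : 0 < r) (ht : 0 < t)
    (h : r * t * (1 + 2 * t ^ 2) ^ ((β - 1) / 2) = 1) :
    r ^ 3 * (t - 1 / r) =
      (1 - (1 + 2 * t ^ 2) ^ ((β - 1) / 2)) /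
        (t ^ 2 * ((1 + 2 * t ^ 2) ^ ((β - 1) / 2)) ^ 3) := by
  set e := (1 + 2 * t ^ 2) ^ ((β - 1) / 2) with he
  have hepos : 0 < e := Real.rpow_pos_of_pos (by nlinarith) _
  have hr' : r = 1 / (t * e) := by
    rw [eq_div_iff (by positivity)]
    linear_combination h
  rw [hr']
  field_simp

lemma ytozero (β : ℝ) (hβ : 0 < β) (y : ℝ → ℝ)
    (hy : ∀ r : ℝ, 0 < r → 0 < y r ∧ r * y r * (1 + 2 * (y r) ^ 2) ^ ((β - 1) / 2) = 1) :
    Tendsto y atTop (nhds 0) := by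
  obtain ⟨D, hD⟩ : ∃ D : ℝ, D = (3:ℝ) ^ ((1 - β) / 2) := ⟨_, rfl⟩
  have hDpos : 0 < D := hD ▸ by positivity
  have key : ∀ r : ℝ, D + 2 ≤ r → 0 < y r ∧ y r ≤ (D + 1) / r := by
    intro r hrC
    have hr : 0 < r := by linarith
    obtain ⟨hyr, heq⟩ := hy r hr
    set t := y r with htdef
    have hbpos : (0:ℝ) < 1 + 2 * t ^ 2 := by nlinarith
    have hre : r * t = (1 + 2 * t ^ 2) ^ ((1 - β) / 2) := by
      have h1 : ((1 + 2 * t ^ 2) ^ ((β - 1) / 2))⁻¹ = (1 + 2 * t ^ 2) ^ ((1 - β) / 2) := by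
        rw [← Real.rpow_neg hbpos.le]
        ring_nf
      rw [← h1]
      exact eq_inv_of_mul_eq_one_right (by linear_combination heq)
    -- first show t ≤ 1
    have ht1 : t ≤ 1 := by
      by_contra hcon
      push_neg at hcon
      rcases le_or_gt β 1 with hβ1 | hβ1
      · have h2 : (1 + 2 * t ^ 2) ≤ 3 * t ^ 2 := by nlinarith
        have h3 : (1 + 2 * t ^ 2) ^ ((1 - β) / 2) ≤ (3 * t ^ 2) ^ ((1 - β) / 2) :=
          Real.rpow_le_rpow hbpos.le h2 (by linarith)
        have h4 : (3 * t ^ 2 : ℝ) ^ ((1 - β) / 2)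
            = (3:ℝ) ^ ((1 - β) / 2) * (t ^ 2) ^ ((1 - β) / 2) :=
          Real.mul_rpow (by norm_num) (by positivity)
        have h5 : (t ^ 2 : ℝ) ^ ((1 - β) / 2) = t ^ (1 - β) := by
          rw [← Real.rpow_natCast t 2, ← Real.rpow_mul (le_of_lt hyr)]
          congr 1
          ring
        have h6 : t ^ (1 - β) ≤ t ^ (1 : ℝ) :=
          Real.rpow_le_rpow_of_exponent_le hcon.le (by linarith)
        have h7 : t ^ (1 : ℝ) = t := Real.rpow_one t
        have h8 : r * t ≤ D * t := by
          rw [hre, hD]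
          calc (1 + 2 * t ^ 2) ^ ((1 - β) / 2) ≤ (3 * t ^ 2) ^ ((1 - β) / 2) := h3
            _ = (3:ℝ) ^ ((1 - β) / 2) * (t ^ 2) ^ ((1 - β) / 2) := h4
            _ = (3:ℝ) ^ ((1 - β) / 2) * t ^ (1 - β) := by rw [h5]
            _ ≤ (3:ℝ) ^ ((1 - β) / 2) * t ^ (1:ℝ) := by
                exact mul_le_mul_of_nonneg_left h6 (by positivity)
            _ = (3:ℝ) ^ ((1 - β) / 2) * t := by rw [h7]
        have h9 : r ≤ D := le_of_mul_le_mul_right h8 hyr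
        linarith
      · have h2 : (1 + 2 * t ^ 2) ^ ((1 - β) / 2) ≤ 1 :=
          Real.rpow_le_one_of_one_le_of_nonpos (by nlinarith) (by linarith)
        have h3 : r * t ≤ 1 := hre ▸ h2
        nlinarith
    refine ⟨hyr, ?_⟩
    have hrtC : r * t ≤ D + 1 := by
      rw [hre]
      rcases le_or_gt β 1 with hβ1 | hβ1
      · have h2 : (1 + 2 * t ^ 2) ^ ((1 - β) / 2) ≤ (3:ℝ) ^ ((1 - β) / 2) :=
          Real.rpow_le_rpow hbpos.le (by nlinarith) (by linarith)
        rw [← hD] at h2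
        linarith
      · have h2 : (1 + 2 * t ^ 2) ^ ((1 - β) / 2) ≤ 1 :=
          Real.rpow_le_one_of_one_le_of_nonpos (by nlinarith) (by linarith)
        linarith
    calc t = r⁻¹ * (r * t) := by field_simp
      _ ≤ r⁻¹ * (D + 1) := mul_le_mul_of_nonneg_left hrtC (by positivity)
      _ = (D + 1) / r := by rw [div_eq_mul_inv, mul_comm]
  have hCr : Tendsto (fun r : ℝ => (D + 1) / r) atTop (nhds 0) :=
    tendsto_const_nhds.div_atTop tendsto_id
  refine tendsto_of_tendsto_of_tendsto_of_le_of_le' tendsto_const_nhds hCr ?_ ?_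
  · filter_upwards [eventually_ge_atTop (D + 2)] with r hr using (key r hr).1.le
  · filter_upwards [eventually_ge_atTop (D + 2)] with r hr using (key r hr).2

lemma Glim (β : ℝ) :
    Tendsto (fun t : ℝ => (1 - (1 + 2 * t ^ 2) ^ ((β - 1) / 2)) /
        (t ^ 2 * ((1 + 2 * t ^ 2) ^ ((β - 1) / 2)) ^ 3))
      (nhdsWithin 0 (Set.Ioi 0)) (nhds (-(β - 1))) := by
  set α := (β - 1) / 2 with hα
  have hf : HasDerivAt (fun u : ℝ => (1 + u) ^ α) α 0 := by
    have h2 : HasDerivAt (fun u : ℝ => 1 + u) 1 0 := by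
      simpa using (hasDerivAt_id (0:ℝ)).const_add (1:ℝ)
    have h3 := h2.rpow_const (p := α) (by norm_num)
    norm_num [Real.one_rpow] at h3
    exact h3
  have hslope : Tendsto (slope (fun u : ℝ => (1 + u) ^ α) 0)
      (nhdsWithin 0 {(0:ℝ)}ᶜ) (nhds α) := hasDerivAt_iff_tendsto_slope.mp hf
  have h2t : Tendsto (fun t : ℝ => 2 * t ^ 2) (nhdsWithin 0 (Set.Ioi 0))
      (nhdsWithin 0 {(0:ℝ)}ᶜ) := by
    rw [tendsto_nhdsWithin_iff]
    constructor
    · have hcont : Continuous (fun t : ℝ => 2 * t ^ 2) := by fun_prop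
      have h0 := hcont.tendsto 0
      norm_num at h0
      exact h0.mono_left nhdsWithin_le_nhds
    · filter_upwards [self_mem_nhdsWithin] with t ht
      simp only [Set.mem_Ioi] at ht
      simp only [Set.mem_compl_iff, Set.mem_singleton_iff]
      positivity
  have hcomp : Tendsto (fun t : ℝ => slope (fun u : ℝ => (1 + u) ^ α) 0 (2 * t ^ 2))
      (nhdsWithin 0 (Set.Ioi 0)) (nhds α) := hslope.comp h2t
  have hinv : Tendsto (fun t : ℝ => (((1 + 2 * t ^ 2) ^ α) ^ 3)⁻¹)
      (nhdsWithin 0 (Set.Ioi 0)) (nhds 1) := by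
    have c0 : ContinuousAt (fun t : ℝ => 1 + 2 * t ^ 2) 0 := by fun_prop
    have c1 : ContinuousAt (fun x : ℝ => x ^ α) ((fun t : ℝ => 1 + 2 * t ^ 2) 0) :=
      Real.continuousAt_rpow_const _ _ (Or.inl (by norm_num))
    have hc : ContinuousAt (fun t : ℝ => (1 + 2 * t ^ 2) ^ α) 0 :=
      ContinuousAt.comp (f := fun t : ℝ => 1 + 2 * t ^ 2) c1 c0
    have c2 : ContinuousAt (fun t : ℝ => (((1 + 2 * t ^ 2) ^ α) ^ 3)⁻¹) 0 := by
      apply ContinuousAt.inv₀ (hc.pow 3)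
      norm_num [Real.one_rpow]
    have h4 := c2.tendsto.mono_left (nhdsWithin_le_nhds (s := Set.Ioi (0:ℝ)))
    norm_num [Real.one_rpow] at h4
    exact h4
  have hmul : Tendsto (fun t : ℝ =>
      (-2 * slope (fun u : ℝ => (1 + u) ^ α) 0 (2 * t ^ 2)) *
        (((1 + 2 * t ^ 2) ^ α) ^ 3)⁻¹)
      (nhdsWithin 0 (Set.Ioi 0)) (nhds (-(β - 1))) := by
    have := ((hcomp.const_mul (-2)).mul hinv)
    have heq : -2 * α * 1 = -(β - 1) := by rw [hα]; ring
    rwa [heq] at this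
  refine hmul.congr' ?_
  filter_upwards [self_mem_nhdsWithin] with t ht
  simp only [Set.mem_Ioi] at ht
  have hbpos : (0:ℝ) < 1 + 2 * t ^ 2 := by nlinarith
  have hepos : (0:ℝ) < (1 + 2 * t ^ 2) ^ α := Real.rpow_pos_of_pos hbpos _
  rw [slope_def_field]
  have h10 : ((1:ℝ) + 0) ^ α = 1 := by norm_num
  rw [h10]
  field_simp
  ring

theorem stmt4 (β : ℝ) (hβ : 0 < β) (y : ℝ → ℝ)
    (hy : ∀ r : ℝ, 0 < r → 0 < y r ∧ r * y r * (1 + 2 * (y r) ^ 2) ^ ((β - 1) / 2) = 1) :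
    Filter.Tendsto (fun r => r ^ 3 * (y r - 1 / r)) Filter.atTop (nhds (-(β - 1))) := by
  have hy0 : Tendsto y atTop (nhds 0) := ytozero β hβ y hy
  have hyIn : Tendsto y atTop (nhdsWithin 0 (Set.Ioi 0)) := by
    rw [tendsto_nhdsWithin_iff]
    refine ⟨hy0, ?_⟩
    filter_upwards [eventually_gt_atTop (0:ℝ)] with r hr
    exact (hy r hr).1
  have hGy := (Glim β).comp hyIn
  refine hGy.congr' ?_
  filter_upwards [eventually_gt_atTop (0:ℝ)] with r hr
  obtain ⟨h1, h2⟩ := hy r hr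
  exact (alg4 β r (y r) hr h1 h2).symm
end

section
/- Let β > 0 and for each r > 0 let y(r) > 0 be the unique solution of r·y·(1+2y²)^((β-1)/2) = 1. Then (r^(1/β)·y(r) − 2^((1−β)/(2β))) / r^(2/β) → −((β−1)/β)·2^(−(3β+1)/(2β)) as r → 0⁺. -/
/-!
With `δ = y⁻²` the equation `r y (1 + 2y²)^((β-1)/2) = 1` becomes exactly
`r^(1/β) y = (2 + δ)^c` with `c = (1-β)/(2β)`, while `r^(2/β) = (r^(1/β) y)² δ`.
Since `y → ∞` as `r → 0⁺`, we have `δ → 0`, and the quotient in question is the difference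
quotient of `x ↦ x^c` at `2` divided by `(2 + δ)^(2c)`; it tends to `c 2^(c-1) / 2^(2c)`.
-/

open Filter Real Set Topology

theorem tendsto_atTop_of_eventually_mul_eq_one {α : Type*} {l : Filter α} {f : ℝ → ℝ}
    (hf : ContinuousOn f (Ici 0)) {r y : α → ℝ} (hr : Tendsto r l (𝓝 0))
    (hy : ∀ᶠ t in l, 0 ≤ y t ∧ r t * f (y t) = 1) : Tendsto y l atTop := by
  rw [tendsto_atTop]
  intro M
  obtain ⟨C, hC⟩ :=
    (isCompact_Icc (a := 0) (b := M)).exists_bound_of_continuousOn (hf.mono Icc_subset_Ici_self)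
  have hsmall : ∀ᶠ t in l, ‖r t‖ < (|C| + 1)⁻¹ :=
    hr.norm.eventually (gt_mem_nhds (by rw [norm_zero]; positivity))
  filter_upwards [hy, hsmall] with t ⟨hy0, heq⟩ hrt
  by_contra! hyM
  have hfy : ‖f (y t)‖ ≤ |C| := (hC _ ⟨hy0, hyM.le⟩).trans (le_abs_self C)
  have hone : ‖r t‖ * ‖f (y t)‖ = 1 := by rw [← norm_mul, heq, norm_one]
  have hrC : ‖r t‖ * (|C| + 1) < 1 := by
    rwa [← lt_div_iff₀ (by positivity), one_div]
  nlinarith [norm_nonneg (r t), norm_nonneg (f (y t))]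

theorem tendsto_rpow_add_sub_div {a : ℝ} (ha : 0 < a) (c : ℝ) :
    Tendsto (fun t => ((a + t) ^ c - a ^ c) / t) (𝓝[≠] 0) (𝓝 (c * a ^ (c - 1))) := by
  refine (hasDerivAt_iff_tendsto_slope_zero.mp (hasDerivAt_rpow_const (Or.inl ha.ne'))).congr
    fun t => ?_
  rw [smul_eq_mul, inv_mul_eq_div]

theorem rpow_one_div_mul_eq_of_mul_rpow_eq_one {β r y : ℝ} (hβ : β ≠ 0) (hr : 0 < r)
    (hy : 0 < y) (h : r * y * (1 + 2 * y ^ 2) ^ ((β - 1) / 2) = 1) :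
    r ^ (1 / β) * y = (2 + (y ^ 2)⁻¹) ^ ((1 - β) / (2 * β)) := by
  set p := (β - 1) / 2
  have hsplit : (1 + 2 * y ^ 2) ^ p = y ^ β / y * (2 + (y ^ 2)⁻¹) ^ p := by
    rw [show 1 + 2 * y ^ 2 = y ^ 2 * (2 + (y ^ 2)⁻¹) by field_simp; ring,
      mul_rpow (by positivity) (by positivity), ← rpow_natCast, ← rpow_mul hy.le,
      ← rpow_sub_one hy.ne']
    congr 2
    ring
  have hryβ : r * y ^ β = ((2 + (y ^ 2)⁻¹) ^ p)⁻¹ := by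
    refine eq_inv_of_mul_eq_one_left ?_
    rw [← h, hsplit]
    field_simp
  calc r ^ (1 / β) * y = (r * y ^ β) ^ (1 / β) := by
        rw [mul_rpow hr.le (by positivity), ← rpow_mul hy.le, mul_one_div_cancel hβ, rpow_one]
    _ = _ := by
        rw [hryβ, ← rpow_neg (by positivity), ← rpow_mul (by positivity)]
        congr 1
        field_simp
        ring

theorem mul_two_rpow_sub_one_div_two_rpow_sq {β : ℝ} (hβ : β ≠ 0) :
    (1 - β) / (2 * β) * (2 : ℝ) ^ ((1 - β) / (2 * β) - 1) / ((2 : ℝ) ^ ((1 - β) / (2 * β))) ^ 2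
      = -((β - 1) / β) * (2 : ℝ) ^ (-(3 * β + 1) / (2 * β)) := by
  set c := (1 - β) / (2 * β) with hc
  have hexp : -(3 * β + 1) / (2 * β) = -c - 2 := by
    rw [hc]
    field_simp
    ring
  rw [hexp, rpow_sub_one two_ne_zero, rpow_sub two_pos, rpow_neg two_pos.le, rpow_two]
  have h2c : (0 : ℝ) < 2 ^ c := by positivity
  field_simp
  rw [hc]
  field_simp
  ring

theorem stmt6 (β : ℝ) (hβ : 0 < β) (y : ℝ → ℝ)
    (hy : ∀ r : ℝ, 0 < r → 0 < y r ∧ r * y r * (1 + 2 * (y r) ^ 2) ^ ((β - 1) / 2) = 1) :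
    Filter.Tendsto
      (fun r => (r ^ (1 / β) * y r - (2 : ℝ) ^ ((1 - β) / (2 * β))) / r ^ (2 / β))
      (nhdsWithin 0 (Set.Ioi 0))
      (nhds (-((β - 1) / β) * (2 : ℝ) ^ (-(3 * β + 1) / (2 * β)))) := by
  set c := (1 - β) / (2 * β)
  have hy_top : Tendsto y (𝓝[>] 0) atTop :=
    tendsto_atTop_of_eventually_mul_eq_one (r := fun r => r)
      (f := fun t => t * (1 + 2 * t ^ 2) ^ ((β - 1) / 2))
      (continuous_id.mul ((by fun_prop : Continuous fun t : ℝ => 1 + 2 * t ^ 2).rpow_const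
        fun t => Or.inl (by positivity))).continuousOn
      (tendsto_nhdsWithin_of_tendsto_nhds tendsto_id)
      (eventually_nhdsWithin_of_forall fun r hr =>
        ⟨(hy r hr).1.le, by rw [← mul_assoc, (hy r hr).2]⟩)
  have hδ : Tendsto (fun r => (y r ^ 2)⁻¹) (𝓝[>] 0) (𝓝[≠] 0) :=
    tendsto_nhdsWithin_mono_right (fun _ h => ne_of_gt h)
      (tendsto_inv_atTop_nhdsGT_zero.comp ((tendsto_pow_atTop two_ne_zero).comp hy_top))
  have hu : Tendsto (fun r => (2 + (y r ^ 2)⁻¹) ^ c) (𝓝[>] 0) (𝓝 (2 ^ c)) :=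
    (continuousAt_rpow_const 2 c (Or.inl two_ne_zero)).tendsto.comp
      (by simpa using (hδ.mono_right nhdsWithin_le_nhds).const_add 2)
  have hlim := ((tendsto_rpow_add_sub_div two_pos c).comp hδ).div (hu.pow 2) (by positivity)
  rw [mul_two_rpow_sub_one_div_two_rpow_sq hβ.ne'] at hlim
  refine hlim.congr' (eventually_nhdsWithin_of_forall fun r hr => ?_)
  obtain ⟨hy0, heq⟩ := hy r hr
  have hr2 : r ^ (2 / β) = (r ^ (1 / β) * y r) ^ 2 * (y r ^ 2)⁻¹ := by
    rw [mul_pow, ← rpow_natCast, ← rpow_mul hr.le]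
    field_simp
    norm_cast
  simp only [Pi.div_apply, Function.comp_apply]
  rw [hr2, rpow_one_div_mul_eq_of_mul_rpow_eq_one hβ.ne' hr hy0 heq, div_div, mul_comm]
end

section
/- Let α : Σ → (0, π/2) be a smooth function on a Riemannian surface satisfying Δ cos α = (2β sin²α/(cos α(cos²α + β sin²α)))|∇α|² − 2 cos α |∇α|² (the curvature term vanishing, e.g. flat ambient space). Then Δ(1/cos α) = (2/(cos α(cos²α + β sin²α)))|∇α|² ≥ 0 for β ≥ 0, i.e. 1/cos α is subharmonic. -/
open EuclideanSpace in
/-- The flat Laplacian on `ℝ²`: sum of second partial derivatives. -/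
noncomputable def flatLaplacian (u : EuclideanSpace ℝ (Fin 2) → ℝ)
    (x : EuclideanSpace ℝ (Fin 2)) : ℝ :=
  ∑ i : Fin 2, fderiv ℝ (fun y => fderiv ℝ u y (single i 1)) x (single i 1)

open EuclideanSpace in
/-- The squared norm of the gradient for the flat metric on `ℝ²`. -/
noncomputable def gradNormSq (u : EuclideanSpace ℝ (Fin 2) → ℝ)
    (x : EuclideanSpace ℝ (Fin 2)) : ℝ :=
  ∑ i : Fin 2, (fderiv ℝ u x (single i 1)) ^ 2

open EuclideanSpace

lemma second_inv (f : EuclideanSpace ℝ (Fin 2) → ℝ) (hf : ContDiff ℝ (⊤ : ℕ∞) f)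
    (hne : ∀ y, f y ≠ 0) (x : EuclideanSpace ℝ (Fin 2)) (v : EuclideanSpace ℝ (Fin 2)) :
    fderiv ℝ (fun y => fderiv ℝ (fun z => (f z)⁻¹) y v) x v
      = -(fderiv ℝ (fun y => fderiv ℝ f y v) x v)/(f x)^2
        + 2 * (fderiv ℝ f x v)^2/(f x)^3 := by
  have hdiff : Differentiable ℝ f := hf.differentiable (by simp)
  have h1 : ∀ y, HasFDerivAt (fun z => (f z)⁻¹) ((-((f y)^2)⁻¹) • fderiv ℝ f y) y := by
    intro y
    exact (hasDerivAt_inv (hne y)).comp_hasFDerivAt y (hdiff y).hasFDerivAt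
  have heqfun : (fun y => fderiv ℝ (fun z => (f z)⁻¹) y v)
      = fun y => -((f y)^2)⁻¹ * fderiv ℝ f y v := by
    funext y
    rw [(h1 y).fderiv]
    simp
  rw [heqfun]
  have hBdiff : Differentiable ℝ (fun y => fderiv ℝ f y v) := by
    exact (ContinuousLinearMap.apply ℝ ℝ v).differentiable.comp
      ((hf.fderiv_right (m := (⊤ : ℕ∞)) (by simp)).differentiable (by simp))
  have hB : HasFDerivAt (fun y => fderiv ℝ f y v)
      (fderiv ℝ (fun y => fderiv ℝ f y v) x) x := (hBdiff x).hasFDerivAt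
  have hA0 : HasDerivAt (fun t : ℝ => -((t:ℝ)^2)⁻¹) (2/(f x)^3) (f x) := by
    have h := ((hasDerivAt_pow 2 (f x)).inv (pow_ne_zero 2 (hne x))).neg
    refine h.congr_deriv ?_
    have := hne x
    field_simp
    ring
  have hA : HasFDerivAt (fun y => -((f y)^2)⁻¹) ((2/(f x)^3) • fderiv ℝ f x) x :=
    hA0.comp_hasFDerivAt x (hdiff x).hasFDerivAt
  rw [(hA.fun_mul hB).fderiv]
  simp only [ContinuousLinearMap.add_apply, ContinuousLinearMap.smul_apply, smul_eq_mul]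
  ring

lemma lap_inv (f : EuclideanSpace ℝ (Fin 2) → ℝ) (hf : ContDiff ℝ (⊤ : ℕ∞) f)
    (hne : ∀ y, f y ≠ 0) (x : EuclideanSpace ℝ (Fin 2)) :
    flatLaplacian (fun y => (f y)⁻¹) x
      = -(flatLaplacian f x)/(f x)^2 + 2 * gradNormSq f x/(f x)^3 := by
  simp only [flatLaplacian, gradNormSq, Fin.sum_univ_two]
  rw [second_inv f hf hne x (single 0 1), second_inv f hf hne x (single 1 1)]
  ring

theorem stmt16 (β : ℝ) (α : EuclideanSpace ℝ (Fin 2) → ℝ)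
    (hsmooth : ContDiff ℝ (⊤ : ℕ∞) α)
    (hrange : ∀ x, α x ∈ Set.Ioo 0 (Real.pi / 2))
    (heq : ∀ x, flatLaplacian (fun y => Real.cos (α y)) x =
      (2 * β * Real.sin (α x) ^ 2 /
          (Real.cos (α x) * (Real.cos (α x) ^ 2 + β * Real.sin (α x) ^ 2))) * gradNormSq α x
        - 2 * Real.cos (α x) * gradNormSq α x) :
    ∀ x, flatLaplacian (fun y => 1 / Real.cos (α y)) x =
        (2 / (Real.cos (α x) * (Real.cos (α x) ^ 2 + β * Real.sin (α x) ^ 2)))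
          * gradNormSq α x ∧
      (0 ≤ β → 0 ≤ flatLaplacian (fun y => 1 / Real.cos (α y)) x) := by
  have hc : ∀ x, 0 < Real.cos (α x) := fun x =>
    Real.cos_pos_of_mem_Ioo ⟨by linarith [(hrange x).1, Real.pi_pos], (hrange x).2⟩
  have hs : ∀ x, 0 < Real.sin (α x) := fun x =>
    Real.sin_pos_of_pos_of_lt_pi (hrange x).1 (by linarith [(hrange x).2, Real.pi_pos])
  have hf : ContDiff ℝ (⊤ : ℕ∞) (fun y => Real.cos (α y)) := Real.contDiff_cos.comp hsmooth
  have hdiffα : Differentiable ℝ α := hsmooth.differentiable (by simp)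
  have hgrad : ∀ x, gradNormSq (fun y => Real.cos (α y)) x
      = Real.sin (α x)^2 * gradNormSq α x := by
    intro x
    have hfd : fderiv ℝ (fun y => Real.cos (α y)) x = (-Real.sin (α x)) • fderiv ℝ α x :=
      ((Real.hasDerivAt_cos (α x)).comp_hasFDerivAt x (hdiffα x).hasFDerivAt).fderiv
    simp only [gradNormSq, Fin.sum_univ_two, hfd, ContinuousLinearMap.smul_apply, smul_eq_mul]
    ring
  have hlap : ∀ x, flatLaplacian (fun y => (Real.cos (α y))⁻¹) x
      = -(flatLaplacian (fun y => Real.cos (α y)) x)/(Real.cos (α x))^2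
        + 2 * gradNormSq (fun y => Real.cos (α y)) x/(Real.cos (α x))^3 :=
    fun x => lap_inv _ hf (fun y => (hc y).ne') x
  -- the formula on the set where the denominator does not vanish
  have hform : ∀ y, Real.cos (α y)^2 + β*Real.sin (α y)^2 ≠ 0 →
      flatLaplacian (fun z => (Real.cos (α z))⁻¹) y
        = 2/(Real.cos (α y) * (Real.cos (α y)^2 + β*Real.sin (α y)^2)) * gradNormSq α y := by
    intro y hy
    rw [hlap y, hgrad y, heq y]
    have hcy : Real.cos (α y) ≠ 0 := (hc y).ne'
    rw [Real.sin_sq] at hy ⊢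
    field_simp
    ring
  -- continuity facts
  have hcontG : Continuous (fun y => gradNormSq α y) := by
    simp only [gradNormSq]
    apply continuous_finset_sum
    intro i _
    have h0 : ContDiff ℝ (⊤ : ℕ∞) (fun y => fderiv ℝ α y (single i 1)) := by
      exact (ContinuousLinearMap.apply ℝ ℝ (single i 1)).contDiff.comp
        (hsmooth.fderiv_right (m := (⊤ : ℕ∞)) (by simp))
    exact h0.continuous.pow 2
  have hinv : ContDiff ℝ (⊤ : ℕ∞) (fun y => (Real.cos (α y))⁻¹) :=
    hf.inv (fun y => (hc y).ne')
  have hcontF : Continuous (fun y => flatLaplacian (fun z => (Real.cos (α z))⁻¹) y) := by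
    simp only [flatLaplacian]
    apply continuous_finset_sum
    intro i _
    have h1 : ContDiff ℝ (⊤ : ℕ∞) (fun y => fderiv ℝ (fun z => (Real.cos (α z))⁻¹) y (single i 1)) := by
      exact (ContinuousLinearMap.apply ℝ ℝ (single i 1)).contDiff.comp
        (hinv.fderiv_right (m := (⊤ : ℕ∞)) (by simp))
    have h2 : Continuous (fun y =>
        fderiv ℝ (fun z => fderiv ℝ (fun w => (Real.cos (α w))⁻¹) z (single i 1)) y
          (single i 1)) := by
      exact ((ContinuousLinearMap.apply ℝ ℝ (single i 1)).contDiff.comp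
        (h1.fderiv_right (m := (⊤ : ℕ∞)) (by simp))).continuous
    exact h2
  -- the gradient vanishes where the denominator vanishes
  have hG0 : ∀ x₀, Real.cos (α x₀)^2 + β * Real.sin (α x₀)^2 = 0 → gradNormSq α x₀ = 0 := by
    intro x₀ hu0
    by_cases hcl : x₀ ∈ closure {y | Real.cos (α y)^2 + β*Real.sin (α y)^2 ≠ 0}
    · -- limit argument
      have hne : (nhdsWithin x₀ {y | Real.cos (α y)^2 + β*Real.sin (α y)^2 ≠ 0}).NeBot :=
        mem_closure_iff_nhdsWithin_neBot.mp hcl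
      have t1 : Filter.Tendsto (fun y => gradNormSq α y)
          (nhdsWithin x₀ {y | Real.cos (α y)^2 + β*Real.sin (α y)^2 ≠ 0})
          (nhds (gradNormSq α x₀)) :=
        (hcontG.tendsto x₀).mono_left nhdsWithin_le_nhds
      have hcont2 : Continuous (fun y => flatLaplacian (fun z => (Real.cos (α z))⁻¹) y
          * (Real.cos (α y) * (Real.cos (α y)^2 + β*Real.sin (α y)^2)) / 2) := by
        apply Continuous.div_const
        apply hcontF.mul
        exact (Real.continuous_cos.comp hsmooth.continuous).mul
          (((Real.continuous_cos.comp hsmooth.continuous).pow 2).add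
            (continuous_const.mul ((Real.continuous_sin.comp hsmooth.continuous).pow 2)))
      have t2 : Filter.Tendsto (fun y => flatLaplacian (fun z => (Real.cos (α z))⁻¹) y
          * (Real.cos (α y) * (Real.cos (α y)^2 + β*Real.sin (α y)^2)) / 2)
          (nhdsWithin x₀ {y | Real.cos (α y)^2 + β*Real.sin (α y)^2 ≠ 0}) (nhds 0) := by
        have h := (hcont2.tendsto x₀).mono_left
          (nhdsWithin_le_nhds (s := {y | Real.cos (α y)^2 + β*Real.sin (α y)^2 ≠ 0}))
        have hval : flatLaplacian (fun z => (Real.cos (α z))⁻¹) x₀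
            * (Real.cos (α x₀) * (Real.cos (α x₀)^2 + β*Real.sin (α x₀)^2)) / 2 = 0 := by
          rw [hu0]; ring
        rwa [hval] at h
      have t3 : Filter.Tendsto (fun y => gradNormSq α y)
          (nhdsWithin x₀ {y | Real.cos (α y)^2 + β*Real.sin (α y)^2 ≠ 0}) (nhds 0) := by
        apply t2.congr'
        filter_upwards [self_mem_nhdsWithin] with y hy
        have hy' : Real.cos (α y)^2 + β*Real.sin (α y)^2 ≠ 0 := hy
        rw [hform y hy']
        have hcy : Real.cos (α y) ≠ 0 := (hc y).ne'
        field_simp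
      exact tendsto_nhds_unique t1 t3
    · -- interior case: the denominator vanishes on a neighborhood
      have hmem : {y | Real.cos (α y)^2 + β*Real.sin (α y)^2 ≠ 0}ᶜ ∈ nhds x₀ := by
        apply mem_interior_iff_mem_nhds.mp
        rw [interior_compl]
        exact hcl
      have hev : (fun y => Real.cos (α y)^2 + β*Real.sin (α y)^2) =ᶠ[nhds x₀]
          (fun _ => (0:ℝ)) := by
        filter_upwards [hmem] with y hy
        simpa using hy
      have hder0 : fderiv ℝ (fun y => Real.cos (α y)^2 + β*Real.sin (α y)^2) x₀ = 0 := by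
        rw [hev.fderiv_eq]
        exact fderiv_const_apply 0
      have hd : HasDerivAt (fun t => Real.cos t^2 + β*Real.sin t^2)
          (2*Real.sin (α x₀)*Real.cos (α x₀)*(β-1)) (α x₀) := by
        have h1 := (Real.hasDerivAt_cos (α x₀)).pow 2
        have h2 := ((Real.hasDerivAt_sin (α x₀)).pow 2).const_mul β
        have h3 := h1.add h2
        refine h3.congr_deriv ?_
        push_cast
        ring
      have hder : fderiv ℝ (fun y => Real.cos (α y)^2 + β*Real.sin (α y)^2) x₀
          = (2*Real.sin (α x₀)*Real.cos (α x₀)*(β-1)) • fderiv ℝ α x₀ :=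
        (hd.comp_hasFDerivAt x₀ (hdiffα x₀).hasFDerivAt).fderiv
      have hβ1 : β ≠ 1 := by
        intro h
        rw [h] at hu0
        nlinarith [Real.sin_sq_add_cos_sq (α x₀)]
      have hcoef : 2*Real.sin (α x₀)*Real.cos (α x₀)*(β-1) ≠ 0 :=
        mul_ne_zero (mul_ne_zero (mul_ne_zero two_ne_zero (hs x₀).ne') (hc x₀).ne')
          (sub_ne_zero.mpr hβ1)
      have hα0 : fderiv ℝ α x₀ = 0 := by
        have h := hder0
        rw [hder] at h
        rcases smul_eq_zero.mp h with h'|h'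
        · exact absurd h' hcoef
        · exact h'
      simp [gradNormSq, hα0]
  -- conclude
  intro x
  have hone : (fun y => 1 / Real.cos (α y)) = fun y => (Real.cos (α y))⁻¹ := by
    funext y; rw [one_div]
  rw [hone]
  by_cases hu : Real.cos (α x)^2 + β*Real.sin (α x)^2 = 0
  · have hG : gradNormSq α x = 0 := hG0 x hu
    constructor
    · rw [hlap x, hgrad x, heq x, hG, hu]
      simp
    · intro _
      rw [hlap x, hgrad x, heq x, hG]
      simp
  · refine ⟨hform x hu, fun hβ => ?_⟩
    rw [hform x hu]
    have hpos : 0 < Real.cos (α x)^2 + β*Real.sin (α x)^2 :=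
      lt_of_le_of_ne (by nlinarith [hc x, sq_nonneg (Real.sin (α x))]) (Ne.symm hu)
    have hGnn : 0 ≤ gradNormSq α x := Finset.sum_nonneg fun i _ => sq_nonneg _
    exact mul_nonneg (div_nonneg (by norm_num) (le_of_lt (mul_pos (hc x) hpos))) hGnn
end
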